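/- Let n ≥ 1, let a_0(n), a_1(n) be real numbers with 2a_0(n) + a_1(n) = 1, let f : [0,1] → ℝ be continuous, and let x ∈ [0,1]. Set σ_n(x) = (2x(1−x)(n−1)(n−2) + 3n + 1)/(2(n+2)²(n+3)). Then |D_n^{M,1}(f;x) − f(x)| ≤ |D_n(f;x) − f(x)| + |(1 + a_1(n))(1/2 − x)|·{ 3·ω₂(f; √σ_n(x)) + (5/((n+2)√σ_n(x)))·ω₁(f; √σ_n(x)) }. -/

import Mathlib

/-!
Pascal's rule `p_{n,k} = (1 - x) p_{n-1,k} + x p_{n-1,k-1}` and `2 a₀ + a₁ = 1` give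
`D_n^{M,1} f - D_n f = (1 + a₁)(1/2 - x) · (n + 1) Σ_j p_{n-1,j}(x) (∫ p_{n,j+1} f - ∫ p_{n,j} f)`.
For a `C¹` function `g`, integration by parts turns `∫ (p_{n,j+1} - p_{n,j}) g` into
`(n + 1)⁻¹ ∫ p_{n+1,j+1} g'`, so
`(n + 1) |∫ p_{n,j+1} f - ∫ p_{n,j} f| ≤ 2 ‖f - g‖ + ‖g'‖ / (n + 2)` (sup norms on `[0,1]`),
and the `p_{n-1,j}(x)` form a partition of unity. We take for `g` the Steklov mean
`δ⁻² ∫∫ f(t + u - v) du dv` (over `[0, δ]²`) of `f` extended past `[0,1]` by its end chords,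
with `δ = √σ_n(x) ≤ 1/2`: then `‖f - g‖ ≤ (3/2) ω₂(f; δ)` and `‖g'‖ ≤ 2 ω₁(f; δ) / δ`.
-/

open scoped BigOperators
open Set Filter MeasureTheory

/-- Bernstein fundamental function `p_{n,k}` (vanishes for `k > n` since `choose = 0`). -/
noncomputable def bp (n k : ℕ) (x : ℝ) : ℝ :=
  (n.choose k : ℝ) * x ^ k * (1 - x) ^ (n - k)

/-- Bernstein fundamental function with integer index, vanishing for negative `k`. -/
noncomputable def bpz (n : ℕ) (k : ℤ) (x : ℝ) : ℝ :=
  if 0 ≤ k then bp n k.toNat x else 0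

/-- The classical Bernstein operator `B_n`. -/
noncomputable def Bern (n : ℕ) (f : ℝ → ℝ) (x : ℝ) : ℝ :=
  ∑ k ∈ Finset.range (n + 1), bp n k x * f (k / n)

/-- Modified fundamental function `p_{n,k}^{M,1}` with `a(x,n) = a1*x + a0`. -/
noncomputable def bpM1 (a0 a1 : ℝ) (n k : ℕ) (x : ℝ) : ℝ :=
  (a1 * x + a0) * bp (n - 1) k x + (a1 * (1 - x) + a0) * bpz (n - 1) ((k : ℤ) - 1) x

/-- The modified Bernstein operator `B_n^{M,1}`. -/
noncomputable def BernM1 (a0 a1 : ℝ) (n : ℕ) (f : ℝ → ℝ) (x : ℝ) : ℝ :=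
  ∑ k ∈ Finset.range (n + 1), bpM1 a0 a1 n k x * f (k / n)

/-- Second modified fundamental function `p_{n,k}^{M,2}`. -/
noncomputable def bpM2 (n k : ℕ) (x : ℝ) : ℝ :=
  ((n : ℝ) / 2 * x ^ 2 + (-1 - (n : ℝ) / 2) * x + 1) * bp (n - 2) k x
    + (n : ℝ) * x * (1 - x) * bpz (n - 2) ((k : ℤ) - 1) x
    + ((n : ℝ) / 2 * x ^ 2 + (-(n : ℝ) / 2 + 1) * x) * bpz (n - 2) ((k : ℤ) - 2) x

/-- The second modified Bernstein operator `B_n^{M,2}`. -/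
noncomputable def BernM2 (n : ℕ) (f : ℝ → ℝ) (x : ℝ) : ℝ :=
  ∑ k ∈ Finset.range (n + 1), bpM2 n k x * f (k / n)

/-- The Kantorovich operator `K_n`. -/
noncomputable def Kan (n : ℕ) (f : ℝ → ℝ) (x : ℝ) : ℝ :=
  ((n : ℝ) + 1) * ∑ k ∈ Finset.range (n + 1),
    bp n k x * ∫ t in ((k : ℝ) / (n + 1))..(((k : ℝ) + 1) / (n + 1)), f t

/-- The modified Kantorovich operator `K_n^{M,1}`. -/
noncomputable def KanM1 (a0 a1 : ℝ) (n : ℕ) (f : ℝ → ℝ) (x : ℝ) : ℝ :=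
  ((n : ℝ) + 1) * ∑ k ∈ Finset.range (n + 1),
    bpM1 a0 a1 n k x * ∫ t in ((k : ℝ) / (n + 1))..(((k : ℝ) + 1) / (n + 1)), f t

/-- The Durrmeyer operator `D_n`. -/
noncomputable def Dur (n : ℕ) (f : ℝ → ℝ) (x : ℝ) : ℝ :=
  ((n : ℝ) + 1) * ∑ k ∈ Finset.range (n + 1),
    bp n k x * ∫ t in (0:ℝ)..1, bp n k t * f t

/-- The modified Durrmeyer operator `D_n^{M,1}`. -/
noncomputable def DurM1 (a0 a1 : ℝ) (n : ℕ) (f : ℝ → ℝ) (x : ℝ) : ℝ :=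
  ((n : ℝ) + 1) * ∑ k ∈ Finset.range (n + 1),
    bpM1 a0 a1 n k x * ∫ t in (0:ℝ)..1, bp n k t * f t

/-- The genuine Bernstein–Durrmeyer operator `U_n`. -/
noncomputable def Gen (n : ℕ) (f : ℝ → ℝ) (x : ℝ) : ℝ :=
  (1 - x) ^ n * f 0 + x ^ n * f 1 +
    ((n : ℝ) - 1) * ∑ k ∈ Finset.Icc 1 (n - 1),
      bp n k x * ∫ t in (0:ℝ)..1, bp (n - 2) (k - 1) t * f t

/-- The modified genuine Bernstein–Durrmeyer operator `U_n^{M,1}`. -/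
noncomputable def GenM1 (a0 a1 : ℝ) (n : ℕ) (f : ℝ → ℝ) (x : ℝ) : ℝ :=
  (a1 * x + a0) * (1 - x) ^ (n - 1) * f 0 + (a1 * (1 - x) + a0) * x ^ (n - 1) * f 1 +
    ((n : ℝ) - 1) * ∑ k ∈ Finset.Icc 1 (n - 1),
      bpM1 a0 a1 n k x * ∫ t in (0:ℝ)..1, bp (n - 2) (k - 1) t * f t

/-- First modulus of continuity on `[0,1]`. -/
noncomputable def omega1 (f : ℝ → ℝ) (δ : ℝ) : ℝ :=
  sSup {y | ∃ s t : ℝ, s ∈ Icc (0:ℝ) 1 ∧ t ∈ Icc (0:ℝ) 1 ∧ |s - t| ≤ δ ∧ y = |f s - f t|}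

/-- Second modulus of smoothness on `[0,1]`. -/
noncomputable def omega2 (f : ℝ → ℝ) (δ : ℝ) : ℝ :=
  sSup {y | ∃ t h : ℝ, 0 < h ∧ h ≤ δ ∧ t - h ∈ Icc (0:ℝ) 1 ∧ t + h ∈ Icc (0:ℝ) 1 ∧
    y = |f (t + h) - 2 * f t + f (t - h)|}

/-- Sup norm on `[0,1]`. -/
noncomputable def supNorm (g : ℝ → ℝ) : ℝ :=
  sSup {y | ∃ t ∈ Icc (0:ℝ) 1, y = |g t|}

lemma bp_eq_eval (n k : ℕ) (x : ℝ) : bp n k x = (bernsteinPolynomial ℝ n k).eval x := by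
  simp [bp, bernsteinPolynomial]

lemma bp_nonneg (n k : ℕ) {x : ℝ} (hx : x ∈ Icc (0:ℝ) 1) : 0 ≤ bp n k x := by
  have : 0 ≤ 1 - x := by linarith [hx.2]
  have := hx.1
  unfold bp; positivity

@[fun_prop]
lemma continuous_bp (n k : ℕ) : Continuous (bp n k) := by
  unfold bp; fun_prop

lemma sum_bp (n : ℕ) (x : ℝ) : ∑ k ∈ Finset.range (n + 1), bp n k x = 1 := by
  simpa [bp_eq_eval, Polynomial.eval_finsetSum] using
    congrArg (Polynomial.eval x) (bernsteinPolynomial.sum ℝ n)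

lemma bp_succ_apply_zero (n k : ℕ) : bp n (k + 1) 0 = 0 := by
  simp [bp]

lemma bp_apply_one {n k : ℕ} (hk : k < n) : bp n k 1 = 0 := by
  simp [bp, Nat.sub_ne_zero_of_lt hk]

lemma hasDerivAt_bp_succ (n k : ℕ) (t : ℝ) :
    HasDerivAt (bp (n + 1) (k + 1)) ((n + 1) * (bp n k t - bp n (k + 1) t)) t := by
  have h := (bernsteinPolynomial ℝ (n + 1) (k + 1)).hasDerivAt t
  simpa only [bernsteinPolynomial.derivative_succ_aux, Polynomial.eval_mul, Polynomial.eval_sub,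
    Polynomial.eval_add, Polynomial.eval_natCast, Polynomial.eval_one, ← bp_eq_eval] using h

lemma bp_succ_succ {n k : ℕ} (hk : k ≤ n) (x : ℝ) :
    bp (n + 1) (k + 1) x = (1 - x) * bp n (k + 1) x + x * bp n k x := by
  rcases hk.lt_or_eq with hk | rfl
  · obtain ⟨d, rfl⟩ := Nat.exists_eq_add_of_lt hk
    simp only [bp, Nat.choose_succ_succ', Nat.cast_add,
      show k + d + 1 + 1 - (k + 1) = d + 1 by omega, show k + d + 1 - (k + 1) = d by omega,
      show k + d + 1 - k = d + 1 by omega]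
    ring
  · simp [bp, Nat.choose_succ_self]
    ring

lemma bp_zero_succ (n : ℕ) (x : ℝ) : bp (n + 1) 0 x = (1 - x) * bp n 0 x := by
  simp [bp]; ring

lemma bpz_succ_sub_one (n k : ℕ) (x : ℝ) : bpz n ((k + 1 : ℕ) - 1) x = bp n k x := by
  simp [bpz]

lemma bpz_zero_sub_one (n : ℕ) (x : ℝ) : bpz n ((0 : ℕ) - 1) x = 0 := by
  simp [bpz]

lemma integral_bp_succ_sub_mul {n k : ℕ} (hk : k < n) {g g' : ℝ → ℝ}
    (hg : ∀ t, HasDerivAt g (g' t) t) (hg' : Continuous g') :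
    ∫ t in (0:ℝ)..1, (bp n (k + 1) t - bp n k t) * g t
      = (∫ t in (0:ℝ)..1, bp (n + 1) (k + 1) t * g' t) / (n + 1) := by
  have hgc : Continuous g := continuous_iff_continuousAt.2 fun t => (hg t).continuousAt
  have H := intervalIntegral.integral_mul_deriv_eq_deriv_mul (a := 0) (b := 1)
    (fun t _ => hasDerivAt_bp_succ n k t) (fun t _ => hg t)
    (by apply Continuous.intervalIntegrable; fun_prop)
    (hg'.intervalIntegrable _ _)
  have hpull : ∫ t in (0:ℝ)..1, (n + 1) * (bp n k t - bp n (k + 1) t) * g t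
      = -((n + 1) * ∫ t in (0:ℝ)..1, (bp n (k + 1) t - bp n k t) * g t) := by
    rw [← intervalIntegral.integral_const_mul, ← intervalIntegral.integral_neg]
    congr 1; ext t; ring
  rw [bp_apply_one (by omega), bp_succ_apply_zero, hpull] at H
  rw [H]
  field_simp
  ring

lemma integral_bp {n k : ℕ} (hk : k ≤ n) : ∫ t in (0:ℝ)..1, bp n k t = 1 / (n + 1) := by
  induction k with
  | zero =>
    simp only [bp, Nat.choose_zero_right, Nat.cast_one, pow_zero, one_mul, Nat.sub_zero]
    rw [intervalIntegral.integral_comp_sub_left (fun t => t ^ n) 1]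
    norm_num [integral_pow]
  | succ k ih =>
    have H := integral_bp_succ_sub_mul (n := n) (k := k) hk (g := fun _ => 1) (g' := fun _ => 0)
      (fun t => hasDerivAt_const t 1) continuous_const
    simp only [mul_one, mul_zero, intervalIntegral.integral_zero, zero_div] at H
    rw [intervalIntegral.integral_sub ((continuous_bp _ _).intervalIntegrable _ _)
      ((continuous_bp _ _).intervalIntegrable _ _), ih (by omega), sub_eq_zero] at H
    exact H

lemma abs_integral_bp_mul_le {n k : ℕ} (hk : k ≤ n) {φ : ℝ → ℝ} {C : ℝ}
    (hφ : ∀ t ∈ Icc (0:ℝ) 1, |φ t| ≤ C) :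
    |∫ t in (0:ℝ)..1, bp n k t * φ t| ≤ C / (n + 1) := by
  calc |∫ t in (0:ℝ)..1, bp n k t * φ t| ≤ ∫ t in (0:ℝ)..1, bp n k t * C := by
        rw [← Real.norm_eq_abs]
        refine intervalIntegral.norm_integral_le_of_norm_le zero_le_one
          (Filter.Eventually.of_forall fun t ht => ?_)
          (((continuous_bp n k).mul continuous_const).intervalIntegrable (μ := volume) _ _)
        have ht : t ∈ Icc (0:ℝ) 1 := Ioc_subset_Icc_self ht
        rw [Real.norm_eq_abs, abs_mul, abs_of_nonneg (bp_nonneg n k ht)]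
        exact mul_le_mul_of_nonneg_left (hφ t ht) (bp_nonneg n k ht)
    _ = C / (n + 1) := by
        rw [intervalIntegral.integral_mul_const, integral_bp hk]; ring

lemma abs_sum_bp_mul_le {n : ℕ} {x : ℝ} (hx : x ∈ Icc (0:ℝ) 1) {c : ℕ → ℝ} {M : ℝ}
    (hc : ∀ k ∈ Finset.range (n + 1), |c k| ≤ M) :
    |∑ k ∈ Finset.range (n + 1), bp n k x * c k| ≤ M := by
  calc |∑ k ∈ Finset.range (n + 1), bp n k x * c k|
      ≤ ∑ k ∈ Finset.range (n + 1), bp n k x * M := by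
        refine (Finset.abs_sum_le_sum_abs _ _).trans (Finset.sum_le_sum fun k hk => ?_)
        rw [abs_mul, abs_of_nonneg (bp_nonneg n k hx)]
        exact mul_le_mul_of_nonneg_left (hc k hk) (bp_nonneg n k hx)
    _ = M := by rw [← Finset.sum_mul, sum_bp, one_mul]

lemma bpM1_succ_sub_bp {a0 a1 : ℝ} (ha : 2 * a0 + a1 = 1) {m k : ℕ} (hk : k ≤ m + 1) (x : ℝ) :
    bpM1 a0 a1 (m + 1) k x - bp (m + 1) k x
      = (1 + a1) * (1 / 2 - x) * (bpz m ((k : ℤ) - 1) x - bp m k x) := by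
  obtain rfl : a0 = (1 - a1) / 2 := by linarith
  cases k with
  | zero => rw [bpM1, Nat.add_sub_cancel, bp_zero_succ, bpz_zero_sub_one]; ring
  | succ k => rw [bpM1, Nat.add_sub_cancel, bp_succ_succ (by omega), bpz_succ_sub_one]; ring

noncomputable def durDiff (n : ℕ) (f : ℝ → ℝ) (x : ℝ) : ℝ :=
  ((n : ℝ) + 1) * ∑ j ∈ Finset.range n, bp (n - 1) j x *
    ((∫ t in (0:ℝ)..1, bp n (j + 1) t * f t) - ∫ t in (0:ℝ)..1, bp n j t * f t)

lemma durM1_eq_dur_add {a0 a1 : ℝ} (ha : 2 * a0 + a1 = 1) {n : ℕ} (hn : 1 ≤ n)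
    (f : ℝ → ℝ) (x : ℝ) :
    DurM1 a0 a1 n f x = Dur n f x + (1 + a1) * (1 / 2 - x) * durDiff n f x := by
  obtain ⟨m, rfl⟩ := Nat.exists_eq_add_of_le' hn
  set I : ℕ → ℝ := fun k => ∫ t in (0:ℝ)..1, bp (m + 1) k t * f t
  have hshift : ∑ k ∈ Finset.range (m + 2), bpz m ((k : ℤ) - 1) x * I k
      = ∑ j ∈ Finset.range (m + 1), bp m j x * I (j + 1) := by
    rw [Finset.sum_range_succ', bpz_zero_sub_one, zero_mul, add_zero]
    simp only [bpz_succ_sub_one]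
  have hlast : ∑ k ∈ Finset.range (m + 2), bp m k x * I k
      = ∑ j ∈ Finset.range (m + 1), bp m j x * I j := by
    rw [Finset.sum_range_succ, bp, Nat.choose_succ_self]
    simp only [Nat.cast_zero, zero_mul, add_zero]
  rw [← sub_eq_iff_eq_add', DurM1, Dur, durDiff, ← mul_sub, ← Finset.sum_sub_distrib]
  simp only [← sub_mul, Nat.add_sub_cancel]
  rw [Finset.sum_congr rfl fun k hk =>
    congrArg (· * I k) (bpM1_succ_sub_bp ha (Finset.mem_range_succ_iff.1 hk) x)]
  simp only [mul_assoc, ← Finset.mul_sum, sub_mul, Finset.sum_sub_distrib, hshift, hlast,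
    mul_sub]
  push_cast
  ring

lemma abs_integral_bp_succ_sub_le {n k : ℕ} (hk : k < n) {f g g' : ℝ → ℝ} {E D : ℝ}
    (hf : ContinuousOn f (Icc 0 1)) (hg : ∀ t, HasDerivAt g (g' t) t) (hg' : Continuous g')
    (herr : ∀ t ∈ Icc (0:ℝ) 1, |f t - g t| ≤ E) (hder : ∀ t ∈ Icc (0:ℝ) 1, |g' t| ≤ D) :
    ((n : ℝ) + 1) * |(∫ t in (0:ℝ)..1, bp n (k + 1) t * f t) - ∫ t in (0:ℝ)..1, bp n k t * f t|
      ≤ 2 * E + D / (n + 2) := by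
  have hgc : Continuous g := continuous_iff_continuousAt.2 fun t => (hg t).continuousAt
  set A : ℕ → ℝ := fun j => ∫ t in (0:ℝ)..1, bp n j t * (f t - g t)
  have hn1 : (0:ℝ) < n + 1 := by positivity
  have hsplit : ∀ j, ∫ t in (0:ℝ)..1, bp n j t * f t = A j + ∫ t in (0:ℝ)..1, bp n j t * g t := by
    intro j
    have hfg : IntervalIntegrable (fun t => bp n j t * (f t - g t)) volume 0 1 :=
      ContinuousOn.intervalIntegrable_of_Icc zero_le_one (by fun_prop)
    rw [← intervalIntegral.integral_add hfg (by apply Continuous.intervalIntegrable; fun_prop)]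
    congr 1; ext t; ring
  have hparts : (∫ t in (0:ℝ)..1, bp n (k + 1) t * g t) - ∫ t in (0:ℝ)..1, bp n k t * g t
      = (∫ t in (0:ℝ)..1, bp (n + 1) (k + 1) t * g' t) / (n + 1) := by
    rw [← integral_bp_succ_sub_mul hk hg hg', ← intervalIntegral.integral_sub
      (by apply Continuous.intervalIntegrable; fun_prop)
      (by apply Continuous.intervalIntegrable; fun_prop)]
    congr 1; ext t; ring
  have hA : ∀ j ≤ n, |((n : ℝ) + 1) * A j| ≤ E := by
    intro j hj
    rw [abs_mul, abs_of_pos hn1, ← le_div_iff₀' hn1]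
    exact abs_integral_bp_mul_le hj herr
  have hJ : |∫ t in (0:ℝ)..1, bp (n + 1) (k + 1) t * g' t| ≤ D / (n + 2) := by
    have := abs_integral_bp_mul_le (n := n + 1) (k := k + 1) (by omega) hder
    rwa [Nat.cast_add_one, add_assoc, one_add_one_eq_two] at this
  rw [← abs_of_pos hn1, ← abs_mul, hsplit, hsplit,
    show ∀ a b c d : ℝ, a + c - (b + d) = a - b + (c - d) by intros; ring, hparts, mul_add,
    mul_sub, mul_div_cancel₀ _ hn1.ne']
  calc _ ≤ |((n : ℝ) + 1) * A (k + 1)| + |((n : ℝ) + 1) * A k|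
        + |∫ t in (0:ℝ)..1, bp (n + 1) (k + 1) t * g' t| :=
        (abs_add_le _ _).trans (add_le_add_left (abs_sub _ _) _)
    _ ≤ E + E + D / (n + 2) := by gcongr <;> [exact hA _ hk; exact hA _ hk.le]
    _ = 2 * E + D / (n + 2) := by ring

lemma abs_durDiff_le {n : ℕ} (hn : 1 ≤ n) {x : ℝ} (hx : x ∈ Icc (0:ℝ) 1) {f g g' : ℝ → ℝ}
    {E D : ℝ} (hf : ContinuousOn f (Icc 0 1)) (hg : ∀ t, HasDerivAt g (g' t) t)
    (hg' : Continuous g') (herr : ∀ t ∈ Icc (0:ℝ) 1, |f t - g t| ≤ E)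
    (hder : ∀ t ∈ Icc (0:ℝ) 1, |g' t| ≤ D) :
    |durDiff n f x| ≤ 2 * E + D / (n + 2) := by
  obtain ⟨m, rfl⟩ := Nat.exists_eq_add_of_le' hn
  rw [durDiff, Nat.add_sub_cancel, Finset.mul_sum]
  simp only [mul_left_comm ((((m + 1 : ℕ) : ℝ)) + 1)]
  refine abs_sum_bp_mul_le hx fun j hj => ?_
  rw [abs_mul, abs_of_pos (by positivity)]
  exact abs_integral_bp_succ_sub_le (Finset.mem_range.1 hj) hf hg hg' herr hder

lemma abs_le_of_abs_secondDiff_le {φ : ℝ → ℝ} {a b W : ℝ} (hab : a < b)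
    (hφ : ContinuousOn φ (Icc a b)) (ha : φ a = 0) (hb : φ b = 0)
    (hW : ∀ t k, 0 < k → a ≤ t - k → t + k ≤ b → |φ (t + k) - 2 * φ t + φ (t - k)| ≤ W)
    {s : ℝ} (hs : s ∈ Icc a b) : |φ s| ≤ W := by
  have hW0 : 0 ≤ W :=
    (abs_nonneg _).trans (hW ((a + b) / 2) ((b - a) / 2) (by linarith) (by linarith) (by linarith))
  obtain ⟨m, ⟨ham, hmb⟩, hmax⟩ :=
    isCompact_Icc.exists_isMaxOn ⟨a, left_mem_Icc.2 hab.le⟩ hφ.abs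
  have hmax' : ∀ u ∈ Icc a b, |φ u| ≤ |φ m| := hmax
  refine (hmax' s hs).trans ?_
  -- Maximum principle: at a maximum `m` of `|φ|`, a second difference reaching a zero of `φ`
  -- bounds `|φ m|`.
  have key : ∀ u v, u ∈ Icc a b → φ v = 0 → |φ u - 2 * φ m + φ v| ≤ W → |φ m| ≤ W := by
    intro u v hu hv h
    rw [hv, add_zero] at h
    have h2 : |2 * φ m| ≤ |φ u| + |φ u - 2 * φ m| := by
      simpa using abs_sub (φ u) (φ u - 2 * φ m)
    rw [abs_mul, abs_two] at h2
    linarith [hmax' u hu]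
  rcases ham.eq_or_lt with rfl | ham
  · rw [ha, abs_zero]; exact hW0
  rcases hmb.eq_or_lt with rfl | hmb
  · rw [hb, abs_zero]; exact hW0
  rcases le_total (m - a) (b - m) with h | h
  · refine key (m + (m - a)) a ⟨by linarith, by linarith⟩ ha ?_
    simpa using hW m (m - a) (by linarith) (by linarith) (by linarith)
  · refine key (m - (b - m)) b ⟨by linarith, by linarith⟩ hb ?_
    convert hW m (b - m) (by linarith) (by linarith) (by linarith) using 2
    rw [add_sub_cancel]; ring

lemma abs_sub_affine_le {f : ℝ → ℝ} {a b c B W : ℝ} (hab : a < b)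
    (hf : ContinuousOn f (Icc a b)) (ha : f a = c + B * a) (hb : f b = c + B * b)
    (hW : ∀ t k, 0 < k → a ≤ t - k → t + k ≤ b → |f (t + k) - 2 * f t + f (t - k)| ≤ W)
    {s : ℝ} (hs : s ∈ Icc a b) : |f s - (c + B * s)| ≤ W := by
  refine abs_le_of_abs_secondDiff_le (φ := fun s => f s - (c + B * s)) hab
    (hf.sub (by fun_prop)) (by simp [ha]) (by simp [hb]) (fun t k hk hta htb => ?_) hs
  convert hW t k hk hta htb using 2
  ring

/-- Extension of `f` beyond `[0,1]` by its chords over `[0, 2δ]` and `[1 - 2δ, 1]`, so that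
second differences of step at most `δ` remain controlled by those of `f`. -/
noncomputable def chordExt (f : ℝ → ℝ) (δ t : ℝ) : ℝ :=
  f (max 0 (min 1 t)) + (f (2 * δ) - f 0) / (2 * δ) * min t 0
    + (f 1 - f (1 - 2 * δ)) / (2 * δ) * max (t - 1) 0

section chordExt

variable {f : ℝ → ℝ} {δ : ℝ}

lemma chordExt_of_mem {t : ℝ} (ht : t ∈ Icc (0:ℝ) 1) : chordExt f δ t = f t := by
  simp [chordExt, ht.1, ht.2]

lemma chordExt_of_nonpos {t : ℝ} (ht : t ≤ 0) :
    chordExt f δ t = f 0 + (f (2 * δ) - f 0) / (2 * δ) * t := by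
  simp [chordExt, ht, ht.trans zero_le_one, (by linarith : t - 1 ≤ 0)]

lemma chordExt_of_one_le {t : ℝ} (ht : 1 ≤ t) :
    chordExt f δ t = f 1 + (f 1 - f (1 - 2 * δ)) / (2 * δ) * (t - 1) := by
  simp [chordExt, ht, zero_le_one.trans ht, (by linarith : 0 ≤ t - 1)]

lemma continuous_chordExt (hf : ContinuousOn f (Icc 0 1)) : Continuous (chordExt f δ) := by
  have hclamp : Continuous fun t : ℝ => f (max 0 (min 1 t)) :=
    hf.comp_continuous (by fun_prop) fun t =>
      ⟨le_max_left _ _, max_le zero_le_one (min_le_left _ _)⟩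
  exact (hclamp.add (by fun_prop)).add (by fun_prop)

lemma abs_chordExt_add_add_sub_le (hf : ContinuousOn f (Icc 0 1)) (hδ : 0 < δ) (hδ2 : 2 * δ ≤ 1)
    {W : ℝ} (hW : ∀ t k, 0 < k → k ≤ δ → t - k ∈ Icc (0:ℝ) 1 → t + k ∈ Icc (0:ℝ) 1 →
      |f (t + k) - 2 * f t + f (t - k)| ≤ W)
    {t w : ℝ} (ht : t ∈ Icc (0:ℝ) 1) (hw : w ∈ Icc 0 δ) :
    |chordExt f δ (t + w) + chordExt f δ (t - w) - 2 * f t| ≤ 3 * W := by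
  obtain ⟨ht0, ht1⟩ := ht
  obtain ⟨hw0, hwδ⟩ := hw
  have hW' : ∀ a b, 0 ≤ a → b ≤ 1 → b - a = 2 * δ → ∀ t k, 0 < k → a ≤ t - k → t + k ≤ b →
      |f (t + k) - 2 * f t + f (t - k)| ≤ W := fun a b ha hb hab t k hk hta htb =>
    hW t k hk (by linarith) ⟨by linarith, by linarith⟩ ⟨by linarith, by linarith⟩
  set B := (f (2 * δ) - f 0) / (2 * δ)
  set B' := (f 1 - f (1 - 2 * δ)) / (2 * δ)
  have hleft : ∀ s ∈ Icc 0 (2 * δ), |f s - (f 0 + B * s)| ≤ W :=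
    fun s hs => abs_sub_affine_le (by linarith) (hf.mono (Icc_subset_Icc le_rfl hδ2))
      (by simp) (by simp only [B]; field_simp; ring) (hW' _ _ le_rfl hδ2 (by ring)) hs
  have hright : ∀ s ∈ Icc (1 - 2 * δ) 1, |f s - ((f 1 - B') + B' * s)| ≤ W :=
    fun s hs => abs_sub_affine_le (by linarith) (hf.mono (Icc_subset_Icc (by linarith) le_rfl))
      (by simp only [B']; field_simp; ring) (by ring) (hW' _ _ (by linarith) le_rfl (by ring)) hs
  rcases lt_or_ge (t - w) 0 with hneg | hnn
  · have k1 := hleft (t + w) ⟨by linarith, by linarith⟩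
    have k2 := hleft t ⟨ht0, by linarith⟩
    rw [chordExt_of_mem ⟨by linarith, by linarith⟩, chordExt_of_nonpos hneg.le]
    rw [abs_le] at k1 k2 ⊢
    constructor <;> linarith
  rcases le_or_gt (t + w) 1 with hle | hgt
  · rw [chordExt_of_mem ⟨by linarith, hle⟩, chordExt_of_mem ⟨hnn, by linarith⟩]
    rcases hw0.eq_or_lt with rfl | hw0
    · have := (abs_nonneg _).trans
        (hW (1 / 2) δ hδ le_rfl ⟨by linarith, by linarith⟩ ⟨by linarith, by linarith⟩)
      simp only [add_zero, sub_zero, show f t + f t - 2 * f t = 0 by ring, abs_zero]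
      linarith
    · have := hW t w hw0 hwδ ⟨hnn, by linarith⟩ ⟨by linarith, hle⟩
      rw [show f (t + w) + f (t - w) - 2 * f t = f (t + w) - 2 * f t + f (t - w) by ring]
      linarith [abs_nonneg (f (t + w) - 2 * f t + f (t - w))]
  · have k1 := hright (t - w) ⟨by linarith, by linarith⟩
    have k2 := hright t ⟨by linarith, ht1⟩
    rw [chordExt_of_one_le hgt.le, chordExt_of_mem ⟨hnn, by linarith⟩]
    rw [abs_le] at k1 k2 ⊢
    constructor <;> linarith

lemma abs_chord_slope_mul_le (hδ : 0 < δ) {W : ℝ}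
    (hW : ∀ s t, s ∈ Icc (0:ℝ) 1 → t ∈ Icc (0:ℝ) 1 → |s - t| ≤ δ → |f s - f t| ≤ W)
    {p : ℝ} (hp : 0 ≤ p) (hp2 : p + 2 * δ ≤ 1) {v : ℝ} (hv : |v| ≤ δ) :
    |(f (p + 2 * δ) - f p) / (2 * δ) * v| ≤ W := by
  have h1 := hW (p + 2 * δ) (p + δ) ⟨by linarith, hp2⟩ ⟨by linarith, by linarith⟩
    (by rw [show p + 2 * δ - (p + δ) = δ by ring, abs_of_pos hδ])
  have h2 := hW (p + δ) p ⟨by linarith, by linarith⟩ ⟨hp, by linarith⟩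
    (by rw [add_sub_cancel_left, abs_of_pos hδ])
  rw [abs_mul, abs_div, abs_of_pos (by linarith : 0 < 2 * δ), div_mul_eq_mul_div,
    div_le_iff₀ (by linarith)]
  calc |f (p + 2 * δ) - f p| * |v| ≤ 2 * W * δ := by
        refine mul_le_mul ?_ hv (abs_nonneg _) (by linarith [abs_nonneg (f (p + δ) - f p)])
        calc |f (p + 2 * δ) - f p| ≤ |f (p + 2 * δ) - f (p + δ)| + |f (p + δ) - f p| :=
              abs_sub_le _ _ _
          _ ≤ 2 * W := by linarith
    _ = W * (2 * δ) := by ring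

lemma abs_chordExt_sub_le (hδ : 0 < δ) (hδ2 : 2 * δ ≤ 1) {W : ℝ}
    (hW : ∀ s t, s ∈ Icc (0:ℝ) 1 → t ∈ Icc (0:ℝ) 1 → |s - t| ≤ δ → |f s - f t| ≤ W)
    {s : ℝ} (hs0 : 0 ≤ s) (hs1 : s ≤ 1 + δ) :
    |chordExt f δ s - chordExt f δ (s - δ)| ≤ 2 * W := by
  rcases lt_or_ge (s - δ) 0 with hneg | hnn
  · have k1 := hW s 0 ⟨hs0, by linarith⟩ ⟨le_rfl, zero_le_one⟩
      (by rw [sub_zero, abs_of_nonneg hs0]; linarith)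
    have k2 := abs_chord_slope_mul_le hδ hW le_rfl (by linarith) (v := s - δ)
      (abs_le.2 ⟨by linarith, by linarith⟩)
    rw [zero_add] at k2
    rw [chordExt_of_mem ⟨hs0, by linarith⟩, chordExt_of_nonpos hneg.le]
    rw [abs_le] at k1 k2 ⊢
    constructor <;> linarith
  rcases le_or_gt s 1 with hle | hgt
  · rw [chordExt_of_mem ⟨hs0, hle⟩, chordExt_of_mem ⟨hnn, by linarith⟩]
    have := hW s (s - δ) ⟨hs0, hle⟩ ⟨hnn, by linarith⟩ (by rw [sub_sub_cancel, abs_of_pos hδ])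
    linarith [abs_nonneg (f s - f (s - δ))]
  · have k1 := hW 1 (s - δ) ⟨zero_le_one, le_rfl⟩ ⟨hnn, by linarith⟩
      (abs_le.2 ⟨by linarith, by linarith⟩)
    have k2 := abs_chord_slope_mul_le hδ hW (p := 1 - 2 * δ) (by linarith) (by linarith)
      (v := s - 1) (abs_le.2 ⟨by linarith, by linarith⟩)
    rw [sub_add_cancel] at k2
    rw [chordExt_of_one_le hgt.le, chordExt_of_mem ⟨hnn, by linarith⟩]
    rw [abs_le] at k1 k2 ⊢
    constructor <;> linarith

end chordExt

noncomputable def prim (h : ℝ → ℝ) (y : ℝ) : ℝ := ∫ s in (0:ℝ)..y, h s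

noncomputable def secondDiff (φ : ℝ → ℝ) (δ t : ℝ) : ℝ := φ (t + δ) - 2 * φ t + φ (t - δ)

section steklov

variable {h : ℝ → ℝ}

lemma hasDerivAt_prim (hh : Continuous h) (y : ℝ) : HasDerivAt (prim h) (h y) y :=
  (hh.integral_hasStrictDerivAt 0 y).hasDerivAt

lemma continuous_prim (hh : Continuous h) : Continuous (prim h) :=
  continuous_iff_continuousAt.2 fun y => (hasDerivAt_prim hh y).continuousAt

lemma hasDerivAt_secondDiff {φ φ' : ℝ → ℝ} (hφ : ∀ y, HasDerivAt φ (φ' y) y) (δ t : ℝ) :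
    HasDerivAt (secondDiff φ δ) (secondDiff φ' δ t) t :=
  (((hφ (t + δ)).comp_add_const t δ).sub ((hφ t).const_mul 2)).add
    ((hφ (t - δ)).comp_sub_const t δ)

lemma secondDiff_prim (hh : Continuous h) (δ t : ℝ) :
    secondDiff (prim h) δ t = ∫ s in t..t + δ, (h s - h (s - δ)) := by
  have hsub : ∀ a b, prim h b - prim h a = ∫ s in a..b, h s := fun a b =>
    intervalIntegral.integral_interval_sub_left (hh.intervalIntegrable _ _)
      (hh.intervalIntegrable _ _)
  rw [intervalIntegral.integral_sub (hh.intervalIntegrable _ _)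
    (by apply Continuous.intervalIntegrable; fun_prop),
    intervalIntegral.integral_comp_sub_right, add_sub_cancel_right, ← hsub, ← hsub, secondDiff]
  ring

lemma secondDiff_prim_prim_sub (hh : Continuous h) (δ t : ℝ) :
    secondDiff (prim (prim h)) δ t - δ ^ 2 * h t
      = ∫ w in (0:ℝ)..δ, (δ - w) * (h (t + w) + h (t - w) - 2 * h t) := by
  -- Taylor's formula with integral remainder for `Φ`, using `Φ 0 = Φ' 0 = 0`.
  set Φ : ℝ → ℝ := fun w => prim (prim h) (t + w) + prim (prim h) (t - w) - 2 * prim (prim h) t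
    - w ^ 2 * h t
  set Ψ : ℝ → ℝ := fun w => prim h (t + w) - prim h (t - w) - 2 * w * h t
  have hP := hasDerivAt_prim (continuous_prim hh)
  have hΦ : ∀ w, HasDerivAt Φ (Ψ w) w := fun w => by
    have := ((((hP (t + w)).comp_const_add t w).add ((hP (t - w)).comp_const_sub t w)).sub_const
      (2 * prim (prim h) t)).sub ((hasDerivAt_pow 2 w).mul_const (h t))
    exact this.congr_deriv (by ring)
  have hΨ : ∀ w, HasDerivAt Ψ (h (t + w) + h (t - w) - 2 * h t) w := fun w => by
    have := (((hasDerivAt_prim hh (t + w)).comp_const_add t w).sub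
      ((hasDerivAt_prim hh (t - w)).comp_const_sub t w)).sub
      (((hasDerivAt_id w).const_mul 2).mul_const (h t))
    exact this.congr_deriv (by ring)
  have hΨc : Continuous Ψ := continuous_iff_continuousAt.2 fun w => (hΨ w).continuousAt
  have hparts := intervalIntegral.integral_mul_deriv_eq_deriv_mul (a := 0) (b := δ)
    (u := fun w => δ - w) (u' := fun _ => -1) (fun w _ => (hasDerivAt_id w).const_sub δ)
    (fun w _ => hΨ w) (intervalIntegrable_const (μ := volume))
    (by apply Continuous.intervalIntegrable; fun_prop)
  have hFTC := intervalIntegral.integral_eq_sub_of_hasDerivAt (a := 0) (b := δ)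
    (fun w _ => hΦ w) (hΨc.intervalIntegrable _ _)
  simp only [neg_one_mul, intervalIntegral.integral_neg, sub_self, zero_mul, sub_zero] at hparts
  rw [hparts, sub_neg_eq_add, hFTC]
  simp only [Φ, Ψ, secondDiff, add_zero, sub_zero]
  ring

lemma abs_secondDiff_prim_prim_div_sub_le (hh : Continuous h) {δ : ℝ} (hδ : 0 < δ) {t M : ℝ}
    (hM : ∀ w ∈ Icc 0 δ, |h (t + w) + h (t - w) - 2 * h t| ≤ M) :
    |secondDiff (prim (prim h)) δ t / δ ^ 2 - h t| ≤ M / 2 := by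
  have hδ2 : 0 < δ ^ 2 := by positivity
  have hint : |∫ w in (0:ℝ)..δ, (δ - w) * (h (t + w) + h (t - w) - 2 * h t)|
      ≤ ∫ w in (0:ℝ)..δ, (δ - w) * M := by
    have hmaj : IntervalIntegrable (fun w => (δ - w) * M) volume 0 δ := by
      apply Continuous.intervalIntegrable; fun_prop
    rw [← Real.norm_eq_abs]
    refine intervalIntegral.norm_integral_le_of_norm_le hδ.le
      (Filter.Eventually.of_forall fun w hw => ?_) hmaj
    rw [Real.norm_eq_abs, abs_mul, abs_of_nonneg (by linarith [hw.2])]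
    exact mul_le_mul_of_nonneg_left (hM w (Ioc_subset_Icc_self hw)) (by linarith [hw.2])
  have hval : ∫ w in (0:ℝ)..δ, (δ - w) * M = M / 2 * δ ^ 2 := by
    rw [intervalIntegral.integral_mul_const, intervalIntegral.integral_sub
      (intervalIntegrable_const (μ := volume)) intervalIntegral.intervalIntegrable_id,
      integral_id, intervalIntegral.integral_const, smul_eq_mul]
    ring
  rw [← secondDiff_prim_prim_sub hh, hval] at hint
  rwa [div_sub' hδ2.ne', abs_div, abs_of_pos hδ2, div_le_iff₀ hδ2]

lemma abs_secondDiff_prim_le (hh : Continuous h) {δ : ℝ} (hδ : 0 ≤ δ) {t M : ℝ}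
    (hM : ∀ s ∈ Icc t (t + δ), |h s - h (s - δ)| ≤ M) :
    |secondDiff (prim h) δ t| ≤ M * δ := by
  rw [secondDiff_prim hh, ← Real.norm_eq_abs]
  convert intervalIntegral.norm_integral_le_of_norm_le_const fun s hs =>
    (Real.norm_eq_abs _).trans_le (hM s ?_) using 2
  · rw [add_sub_cancel_left, abs_of_nonneg hδ]
  · rw [uIoc_of_le (by linarith)] at hs
    exact Ioc_subset_Icc_self hs

end steklov

theorem exists_smooth_approx {f : ℝ → ℝ} (hf : ContinuousOn f (Icc 0 1)) {δ W₁ W₂ : ℝ}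
    (hδ : 0 < δ) (hδ2 : 2 * δ ≤ 1)
    (hW₁ : ∀ s t, s ∈ Icc (0:ℝ) 1 → t ∈ Icc (0:ℝ) 1 → |s - t| ≤ δ → |f s - f t| ≤ W₁)
    (hW₂ : ∀ t k, 0 < k → k ≤ δ → t - k ∈ Icc (0:ℝ) 1 → t + k ∈ Icc (0:ℝ) 1 →
      |f (t + k) - 2 * f t + f (t - k)| ≤ W₂) :
    ∃ g g' : ℝ → ℝ, (∀ t, HasDerivAt g (g' t) t) ∧ Continuous g' ∧
      (∀ t ∈ Icc (0:ℝ) 1, |f t - g t| ≤ 3 / 2 * W₂) ∧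
      (∀ t ∈ Icc (0:ℝ) 1, |g' t| ≤ 2 * W₁ / δ) := by
  set e := chordExt f δ
  have he : Continuous e := continuous_chordExt hf
  have hδsq : 0 < δ ^ 2 := by positivity
  have hd : ∀ t, HasDerivAt (secondDiff (prim e) δ) (secondDiff e δ t) t :=
    hasDerivAt_secondDiff (hasDerivAt_prim he) δ
  refine ⟨fun t => secondDiff (prim (prim e)) δ t / δ ^ 2, fun t => secondDiff (prim e) δ t / δ ^ 2,
    fun t => (hasDerivAt_secondDiff (hasDerivAt_prim (continuous_prim he)) δ t).div_const _,
    (continuous_iff_continuousAt.2 fun t => (hd t).continuousAt).div_const _,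
    fun t ht => ?_, fun t ht => ?_⟩
  · have hft : f t = e t := (chordExt_of_mem ht).symm
    rw [abs_sub_comm, hft]
    refine (abs_secondDiff_prim_prim_div_sub_le he hδ fun w hw => ?_).trans_eq
      (by ring : 3 * W₂ / 2 = _)
    rw [← hft]
    exact abs_chordExt_add_add_sub_le hf hδ hδ2 hW₂ ht hw
  · have := abs_secondDiff_prim_le he hδ.le (t := t) fun s hs =>
      abs_chordExt_sub_le hδ hδ2 hW₁ (by linarith [ht.1, hs.1]) (by linarith [ht.2, hs.2])
    rw [abs_div, abs_of_pos hδsq, div_le_div_iff₀ hδsq hδ]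
    nlinarith

lemma abs_sub_le_omega1 {f : ℝ → ℝ} (hf : ContinuousOn f (Icc 0 1)) {δ s t : ℝ}
    (hs : s ∈ Icc (0:ℝ) 1) (ht : t ∈ Icc (0:ℝ) 1) (hst : |s - t| ≤ δ) :
    |f s - f t| ≤ omega1 f δ := by
  obtain ⟨C, hC⟩ := isCompact_Icc.exists_bound_of_continuousOn hf
  refine le_csSup ⟨2 * C, ?_⟩ ⟨s, t, hs, ht, hst, rfl⟩
  rintro _ ⟨s, t, hs, ht, -, rfl⟩
  have h1 := hC s hs
  have h2 := hC t ht
  rw [Real.norm_eq_abs] at h1 h2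
  linarith [abs_sub (f s) (f t)]

lemma abs_secondDiff_le_omega2 {f : ℝ → ℝ} (hf : ContinuousOn f (Icc 0 1)) {δ t k : ℝ}
    (hk : 0 < k) (hkδ : k ≤ δ) (h₁ : t - k ∈ Icc (0:ℝ) 1) (h₂ : t + k ∈ Icc (0:ℝ) 1) :
    |f (t + k) - 2 * f t + f (t - k)| ≤ omega2 f δ := by
  obtain ⟨C, hC⟩ := isCompact_Icc.exists_bound_of_continuousOn hf
  refine le_csSup ⟨4 * C, ?_⟩ ⟨t, k, hk, hkδ, h₁, h₂, rfl⟩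
  rintro _ ⟨t, k, hk, -, h₁, h₂, rfl⟩
  have b1 := hC _ h₂
  have b2 := hC t ⟨by linarith [h₁.1], by linarith [h₂.2]⟩
  have b3 := hC _ h₁
  rw [Real.norm_eq_abs] at b1 b2 b3
  rw [abs_le] at b1 b2 b3 ⊢
  constructor <;> linarith

lemma sigma_mem_Ioc {n : ℕ} (hn : 1 ≤ n) {x : ℝ} (hx : x ∈ Icc (0:ℝ) 1) :
    (2 * x * (1 - x) * ((n : ℝ) - 1) * ((n : ℝ) - 2) + 3 * (n : ℝ) + 1) /
      (2 * ((n : ℝ) + 2) ^ 2 * ((n : ℝ) + 3)) ∈ Ioc 0 (1 / 4) := by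
  have hn1 : (1:ℝ) ≤ n := by exact_mod_cast hn
  have hprod : 0 ≤ ((n : ℝ) - 1) * ((n : ℝ) - 2) := by
    rcases hn.eq_or_lt with rfl | h2
    · norm_num
    · have : (2:ℝ) ≤ n := by exact_mod_cast h2
      nlinarith
  have hx0 : 0 ≤ x * (1 - x) := mul_nonneg hx.1 (by linarith [hx.2])
  have hx1 : x * (1 - x) ≤ 1 / 4 := by nlinarith [sq_nonneg (x - 1 / 2)]
  have hden : 0 < 2 * ((n : ℝ) + 2) ^ 2 * ((n : ℝ) + 3) := by positivity
  constructor
  · exact div_pos (by nlinarith [mul_nonneg hx0 hprod]) hden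
  · rw [div_le_iff₀ hden]
    nlinarith [mul_le_mul_of_nonneg_right hx1 hprod]

/-- pointwise estimate for the modified Durrmeyer operator `D_n^{M,1}`. -/
theorem stmt13 (n : ℕ) (hn : 1 ≤ n) (a0 a1 : ℝ) (ha : 2 * a0 + a1 = 1)
    (f : ℝ → ℝ) (hf : ContinuousOn f (Icc 0 1)) (x : ℝ) (hx : x ∈ Icc (0:ℝ) 1)
    (σ : ℝ)
    (hσ : σ = (2 * x * (1 - x) * ((n : ℝ) - 1) * ((n : ℝ) - 2) + 3 * (n : ℝ) + 1) /
      (2 * ((n : ℝ) + 2) ^ 2 * ((n : ℝ) + 3))) :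
    |DurM1 a0 a1 n f x - f x| ≤
      |Dur n f x - f x| + |(1 + a1) * (1 / 2 - x)| *
        (3 * omega2 f (Real.sqrt σ)
          + 5 / (((n : ℝ) + 2) * Real.sqrt σ) * omega1 f (Real.sqrt σ)) := by
  obtain ⟨hσ0, hσ1⟩ : σ ∈ Ioc 0 (1 / 4) := hσ ▸ sigma_mem_Ioc hn hx
  set δ := Real.sqrt σ
  have hδ : 0 < δ := Real.sqrt_pos.2 hσ0
  have hδ2 : 2 * δ ≤ 1 := by nlinarith [Real.sq_sqrt hσ0.le]
  obtain ⟨g, g', hg, hg', herr, hder⟩ := exists_smooth_approx hf hδ hδ2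
    (fun s t hs ht => abs_sub_le_omega1 hf hs ht)
    (fun t k hk hkδ => abs_secondDiff_le_omega2 hf hk hkδ)
  have hω₁ : 0 ≤ omega1 f δ :=
    (abs_nonneg _).trans (abs_sub_le_omega1 hf (left_mem_Icc.2 zero_le_one)
      (left_mem_Icc.2 zero_le_one) (by simpa using hδ.le))
  have hΔ : |durDiff n f x| ≤ 3 * omega2 f δ + 5 / ((n + 2) * δ) * omega1 f δ := by
    calc |durDiff n f x| ≤ 2 * (3 / 2 * omega2 f δ) + 2 * omega1 f δ / δ / (n + 2) :=
          abs_durDiff_le hn hx hf hg hg' herr hder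
      _ = 3 * omega2 f δ + 2 / ((n + 2) * δ) * omega1 f δ := by field_simp
      _ ≤ 3 * omega2 f δ + 5 / ((n + 2) * δ) * omega1 f δ := by gcongr; norm_num
  rw [durM1_eq_dur_add ha hn, add_sub_right_comm]
  calc _ ≤ |Dur n f x - f x| + |(1 + a1) * (1 / 2 - x)| * |durDiff n f x| := by
        rw [← abs_mul]; exact abs_add_le _ _
    _ ≤ _ := by gcongr
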